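/- arXiv:1612.02916 — 2 statements merged into one kernel-verified Lean document; each statement's English description precedes it below -/
import Mathlib

section
/- Let Q be a binomial random variable with n trials and success probability p ∈ [0,1], and set μ = np. Then for every δ > 0, Pr(Q ≥ (1+δ)μ) ≤ exp(−δ·μ·ln(1+δ)/2). -/
open Finset

/-- `Pr(Q ≥ t)` for `Q` binomial with `n` trials and success probability `p`:
the sum of `C(n,k) p^k (1-p)^(n-k)` over all `k ∈ {0,…,n}` with `k ≥ t`. -/
noncomputable def binomPrGe (n : ℕ) (p : ℝ) (t : ℝ) : ℝ :=
  ∑ k ∈ Finset.range (n + 1),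
    if t ≤ (k : ℝ) then (n.choose k : ℝ) * p ^ k * (1 - p) ^ (n - k) else 0

/-!
Exponential Markov: for `s ≥ 0` the indicator of `Q ≥ t` is at most `exp (s (Q - t))`, and the
binomial theorem evaluates `E exp (s Q) = (p eˢ + 1 - p)ⁿ ≤ exp (n p (eˢ - 1))`. Taking
`s = ln (1 + δ)` gives the exponent `μ (δ - (1 + δ) ln (1 + δ))`, and `ln (1 + δ) ≥ 2δ / (δ + 2)`
turns this into `-δ μ ln (1 + δ) / 2`.
-/

open Real

theorem binomPrGe_le_exp_neg_mul_mul_pow {n : ℕ} {p : ℝ} (hp0 : 0 ≤ p) (hp1 : p ≤ 1)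
    {s : ℝ} (hs : 0 ≤ s) (t : ℝ) :
    binomPrGe n p t ≤ exp (-(s * t)) * (p * exp s + (1 - p)) ^ n := by
  rw [add_pow, mul_sum]
  refine sum_le_sum fun k _ => ?_
  have hterm : 0 ≤ (n.choose k : ℝ) * p ^ k * (1 - p) ^ (n - k) := by
    have : 0 ≤ 1 - p := sub_nonneg.2 hp1
    positivity
  split_ifs with hk
  · have hone : 1 ≤ exp (s * (k - t)) := one_le_exp (mul_nonneg hs (sub_nonneg.2 hk))
    calc (n.choose k : ℝ) * p ^ k * (1 - p) ^ (n - k)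
        ≤ (n.choose k : ℝ) * p ^ k * (1 - p) ^ (n - k) * exp (s * (k - t)) :=
          le_mul_of_one_le_right hterm hone
      _ = _ := by
          rw [mul_sub, exp_sub, exp_neg, mul_comm s (k : ℝ), exp_nat_mul, mul_pow]
          ring
  · positivity

theorem binomPrGe_le_exp {n : ℕ} {p : ℝ} (hp0 : 0 ≤ p) (hp1 : p ≤ 1)
    {s : ℝ} (hs : 0 ≤ s) (t : ℝ) :
    binomPrGe n p t ≤ exp (n * p * (exp s - 1) - s * t) := by
  have hmgf : (p * exp s + (1 - p)) ^ n ≤ exp (n * p * (exp s - 1)) := by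
    calc (p * exp s + (1 - p)) ^ n = (p * (exp s - 1) + 1) ^ n := by ring
      _ ≤ exp (p * (exp s - 1)) ^ n := by
          gcongr
          · nlinarith [one_le_exp hs]
          · exact add_one_le_exp _
      _ = _ := by rw [← exp_nat_mul, mul_assoc]
  calc binomPrGe n p t ≤ exp (-(s * t)) * (p * exp s + (1 - p)) ^ n :=
        binomPrGe_le_exp_neg_mul_mul_pow hp0 hp1 hs t
    _ ≤ exp (-(s * t)) * exp (n * p * (exp s - 1)) := by gcongr
    _ = _ := by rw [← exp_add]; ring_nf

/-- Chernoff bound: for a binomial random variable `Q` with `n` trials and success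
probability `p ∈ [0,1]`, setting `μ = n p`, for every `δ > 0`,
`Pr(Q ≥ (1+δ)μ) ≤ exp (-(δ μ ln (1+δ)) / 2)`. -/
theorem binomial_chernoff (n : ℕ) (p : ℝ) (hp0 : 0 ≤ p) (hp1 : p ≤ 1)
    (δ : ℝ) (hδ : 0 < δ) :
    binomPrGe n p ((1 + δ) * (n * p)) ≤
      Real.exp (-(δ * (n * p) * Real.log (1 + δ)) / 2) := by
  have hδ₁ : 0 < 1 + δ := by linarith
  have hlog : δ ≤ (1 + δ / 2) * log (1 + δ) := by
    have := le_log_one_add_of_nonneg hδ.le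
    rw [div_le_iff₀ (by linarith)] at this
    linarith
  refine (binomPrGe_le_exp hp0 hp1 (log_nonneg (by linarith : (1 : ℝ) ≤ 1 + δ))
    ((1 + δ) * (n * p))).trans (exp_le_exp.2 ?_)
  rw [exp_log hδ₁, add_sub_cancel_left]
  nlinarith [mul_le_mul_of_nonneg_left hlog (mul_nonneg (Nat.cast_nonneg n) hp0)]
end

section
/- Let X_1, …, X_n be independent Bernoulli random variables where X_i equals 1 with probability p_i, and suppose p_i ≤ p for all i, where 0 < p < 1/3. Then Pr(X_1 + ⋯ + X_n ≥ n/3) ≤ exp(n·(1−3p)·ln(3p)/6). -/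
/-!
Chernoff's method: a `{0,1}`-valued variable with success probability at most `p` has
`mgf t ≤ exp ((exp t - 1) p)`, so by independence and Markov's inequality
`Pr(∑ X i ≥ n/3) ≤ exp (-t n/3 + n (exp t - 1) p)`. Taking `exp t = 1/(3p)` gives
`exp (n (log u + 1 - u) / 3)` with `u = 3p < 1`, and this is at most the claimed bound because
`log u ≤ -2 (1 - u) / (1 + u)`, the first term of the series `log (1/u) = 2 artanh ((1-u)/(1+u))`.
-/

open MeasureTheory ProbabilityTheory Real

theorem two_mul_one_sub_div_one_add_le_neg_log {u : ℝ} (hu0 : 0 < u) (hu1 : u < 1) :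
    2 * (1 - u) / (1 + u) ≤ -log u := by
  have hne : 1 - u ≠ 0 := by linarith
  have hsum := hasSum_log_one_add_inv (div_pos hu0 (sub_pos.mpr hu1))
  have hinv : 1 + (u / (1 - u))⁻¹ = u⁻¹ := by field_simp; ring
  have hfirst : 1 / (2 * (u / (1 - u)) + 1) = (1 - u) / (1 + u) := by
    rw [mul_div_assoc', div_add_one hne, one_div_div]
    ring
  rw [hinv, log_inv, hfirst] at hsum
  simpa [mul_div_assoc] using le_hasSum hsum 0 fun k _ => by positivity

theorem exp_mul_eq_one_add_indicator {Ω : Type*} {X : Ω → ℝ} (h01 : ∀ ω, X ω = 0 ∨ X ω = 1)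
    (t : ℝ) :
    (fun ω => exp (t * X ω)) =
      fun ω => 1 + (exp t - 1) * {ω | X ω = 1}.indicator 1 ω := by
  funext ω
  rcases h01 ω with h | h <;> simp [h]

section ZeroOne

variable {Ω : Type*} [MeasurableSpace Ω] {μ : Measure Ω} [IsProbabilityMeasure μ] {X : Ω → ℝ}

theorem integrable_exp_mul_of_zero_or_one (hX : Measurable X) (h01 : ∀ ω, X ω = 0 ∨ X ω = 1)
    (t : ℝ) : Integrable (fun ω => exp (t * X ω)) μ := by
  rw [exp_mul_eq_one_add_indicator h01]
  exact (integrable_const 1).add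
    (((integrable_const 1).indicator (hX (measurableSet_singleton 1))).const_mul _)

theorem mgf_eq_of_zero_or_one (hX : Measurable X) (h01 : ∀ ω, X ω = 0 ∨ X ω = 1) (t : ℝ) :
    mgf X μ t = 1 + (exp t - 1) * μ.real {ω | X ω = 1} := by
  have hs : MeasurableSet {ω | X ω = 1} := hX (measurableSet_singleton 1)
  rw [mgf, exp_mul_eq_one_add_indicator h01, integral_add (integrable_const 1)
    (((integrable_const 1).indicator hs).const_mul _), integral_const_mul,
    integral_indicator_one hs]
  simp

theorem mgf_le_exp_of_zero_or_one (hX : Measurable X) (h01 : ∀ ω, X ω = 0 ∨ X ω = 1)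
    {t q : ℝ} (ht : 0 ≤ t) (hq : μ.real {ω | X ω = 1} ≤ q) :
    mgf X μ t ≤ exp ((exp t - 1) * q) := by
  have hc : 0 ≤ exp t - 1 := sub_nonneg.mpr (one_le_exp ht)
  calc mgf X μ t = 1 + (exp t - 1) * μ.real {ω | X ω = 1} := mgf_eq_of_zero_or_one hX h01 t
    _ ≤ (exp t - 1) * q + 1 := by nlinarith
    _ ≤ exp ((exp t - 1) * q) := add_one_le_exp _

end ZeroOne

theorem measureReal_sum_ge_le_of_zero_or_one {Ω ι : Type*} [MeasurableSpace Ω] {μ : Measure Ω}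
    [Fintype ι] {X : ι → Ω → ℝ} (hind : iIndepFun X μ) (hX : ∀ i, Measurable (X i))
    (h01 : ∀ i ω, X i ω = 0 ∨ X i ω = 1) {q t : ℝ} (hq : ∀ i, μ.real {ω | X i ω = 1} ≤ q)
    (ht : 0 ≤ t) (a : ℝ) :
    μ.real {ω | a ≤ ∑ i, X i ω} ≤ exp (-t * a + Fintype.card ι * ((exp t - 1) * q)) := by
  have := hind.isProbabilityMeasure
  have hint := hind.integrable_exp_mul_sum hX (s := Finset.univ) fun i _ =>
    integrable_exp_mul_of_zero_or_one (μ := μ) (hX i) (h01 i) t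
  have hmgf : mgf (∑ i, X i) μ t ≤ exp ((exp t - 1) * q) ^ Fintype.card ι := by
    rw [hind.mgf_sum hX, ← Finset.card_univ, ← Finset.prod_const]
    exact Finset.prod_le_prod (fun i _ => mgf_nonneg)
      fun i _ => mgf_le_exp_of_zero_or_one (hX i) (h01 i) ht (hq i)
  calc μ.real {ω | a ≤ ∑ i, X i ω} = μ.real {ω | a ≤ (∑ i, X i) ω} := by
        simp only [Finset.sum_apply]
    _ ≤ exp (-t * a) * mgf (∑ i, X i) μ t := measure_ge_le_exp_mul_mgf a ht hint
    _ ≤ exp (-t * a) * exp ((exp t - 1) * q) ^ Fintype.card ι := by gcongr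
    _ = exp (-t * a + Fintype.card ι * ((exp t - 1) * q)) := by
        rw [exp_add, exp_nat_mul]

theorem bernoulli_sum_tail_general
    {Ω : Type*} [MeasurableSpace Ω] (P : Measure Ω)
    (n : ℕ) (p : ℝ) (hp0 : 0 < p) (hp : p < 1 / 3)
    (p' : Fin n → ℝ) (hp'le : ∀ i, p' i ≤ p)
    (X : Fin n → Ω → ℝ) (hmeas : ∀ i, Measurable (X i))
    (h01 : ∀ i ω, X i ω = 0 ∨ X i ω = 1)
    (hber : ∀ i, P {ω | X i ω = 1} = ENNReal.ofReal (p' i))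
    (hind : iIndepFun X P) :
    (P {ω | (n : ℝ) / 3 ≤ ∑ i, X i ω}).toReal ≤
      Real.exp ((n : ℝ) * (1 - 3 * p) * Real.log (3 * p) / 6) := by
  have hu0 : 0 < 3 * p := by linarith
  have hu1 : 3 * p < 1 := by linarith
  have hq : ∀ i, P.real {ω | X i ω = 1} ≤ p := fun i => by
    rw [measureReal_def, hber, ENNReal.toReal_ofReal']
    exact max_le (hp'le i) hp0.le
  -- Chernoff's bound at its optimal parameter `t = -log (3p)`, where `exp t = 1 / (3p)`.
  have ht : 0 ≤ -log (3 * p) := neg_nonneg.mpr (log_nonpos hu0.le hu1.le)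
  rw [← measureReal_def]
  refine (measureReal_sum_ge_le_of_zero_or_one hind hmeas h01 hq ht (n / 3)).trans
    (exp_le_exp.mpr ?_)
  rw [exp_neg, exp_log hu0, Fintype.card_fin]
  have hkey := two_mul_one_sub_div_one_add_le_neg_log hu0 hu1
  rw [div_le_iff₀ (by linarith)] at hkey
  have hn : (0 : ℝ) ≤ n := n.cast_nonneg
  field_simp
  nlinarith [mul_nonneg hn (sub_nonneg.mpr hkey)]

/-- Let `X 0, …, X (n-1)` be mutually independent Bernoulli random variables, `X i`
equal to `1` with probability `p' i` (and `0` otherwise), with `p' i ≤ p` for all `i`,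
where `0 < p < 1/3`. Then `Pr(X 0 + ⋯ + X (n-1) ≥ n/3) ≤ exp (n (1-3p) ln (3p) / 6)`. -/
theorem bernoulli_sum_tail
    {Ω : Type*} [MeasurableSpace Ω] (P : Measure Ω) [IsProbabilityMeasure P]
    (n : ℕ) (p : ℝ) (hp0 : 0 < p) (hp : p < 1 / 3)
    (p' : Fin n → ℝ) (hp'0 : ∀ i, 0 ≤ p' i) (hp'le : ∀ i, p' i ≤ p)
    (X : Fin n → Ω → ℝ) (hmeas : ∀ i, Measurable (X i))
    (h01 : ∀ i ω, X i ω = 0 ∨ X i ω = 1)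
    (hber : ∀ i, P {ω | X i ω = 1} = ENNReal.ofReal (p' i))
    (hind : iIndepFun X P) :
    (P {ω | (n : ℝ) / 3 ≤ ∑ i, X i ω}).toReal ≤
      Real.exp ((n : ℝ) * (1 - 3 * p) * Real.log (3 * p) / 6) :=
  bernoulli_sum_tail_general P n p hp0 hp p' hp'le X hmeas h01 hber hind
end
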